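/- arXiv:1708.04760 — 4 statements merged into one kernel-verified Lean document; each statement's English description precedes it below -/
import Mathlib

section
/- Let R be a commutative ring with an action of a finite group G by ring automorphisms, with |G| invertible in R. Let Q be a G-invariant ideal of R and y₁, …, y_s elements of R^G. Then (Q + (y₁,…,y_s)R) ∩ R^G = (Q ∩ R^G) + (y₁,…,y_s)R^G. -/
/-!
Averaging over `G` with the Reynolds operator `ρ r = |G|⁻¹ ∑ σ, σ • r` is additive, fixes `R^G`,
is `R^G`-linear, lands in `R^G`, and maps the `G`-stable ideal `Q` into itself. So if an invariant
`x` is written as `q + ∑ cᵢ yᵢ` with `q ∈ Q`, then `x = ρ x = ρ q + ∑ ρ(cᵢ) yᵢ` exhibits it as an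
element of `(Q ∩ R^G) + (y₁,…,y_s)R^G`.
-/

open Finset

namespace MulSemiringAction

theorem smul_eq_self_of_natCast_mul_eq_one {R : Type*} [CommSemiring R] (M : Type*) [Monoid M]
    [MulSemiringAction M R] {n : ℕ} {u : R} (hu : (n : R) * u = 1) (σ : M) : σ • u = u := by
  have h := congrArg (σ • ·) hu
  rw [smul_mul', smul_one, show σ • (n : R) = n from map_natCast (toRingHom M R σ) n] at h
  exact left_inv_eq_right_inv (by rw [mul_comm, h]) hu

variable {R : Type*} [CommRing R] (G : Type*) [Group G] [Fintype G] [MulSemiringAction G R]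

/-- The Reynolds operator, with `u` standing for `|G|⁻¹`. -/
def reynolds (u : R) : R →+ R where
  toFun r := u * ∑ σ : G, σ • r
  map_zero' := by simp
  map_add' x z := by simp [smul_add, sum_add_distrib, mul_add]

variable {G}

theorem reynolds_apply (u r : R) : reynolds G u r = u * ∑ σ : G, σ • r := rfl

theorem smul_reynolds {u : R} (hu : ∀ σ : G, σ • u = u) (τ : G) (r : R) :
    τ • reynolds G u r = reynolds G u r := by
  simp only [reynolds_apply, smul_mul', hu τ, smul_sum, ← mul_smul]
  congr 1
  exact Fintype.sum_equiv (Equiv.mulLeft τ) _ _ fun _ => rfl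

theorem reynolds_eq_self {u : R} (hu : (Fintype.card G : R) * u = 1) {b : R}
    (hb : ∀ σ : G, σ • b = b) : reynolds G u b = b := by
  simp only [reynolds_apply, hb, sum_const, card_univ, nsmul_eq_mul]
  linear_combination b * hu

theorem reynolds_mul_of_forall_smul_eq {b : R} (hb : ∀ σ : G, σ • b = b) (u x : R) :
    reynolds G u (x * b) = reynolds G u x * b := by
  simp only [reynolds_apply, smul_mul', hb, ← sum_mul, mul_assoc]

theorem reynolds_mem_ideal {Q : Ideal R} (hQ : ∀ σ : G, ∀ x ∈ Q, σ • x ∈ Q) (u : R) {q : R}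
    (hq : q ∈ Q) : reynolds G u q ∈ Q :=
  Q.mul_mem_left u (Q.sum_mem fun σ _ => hQ σ q hq)

theorem exists_reynolds_eq_add_sum {ι : Type*} [Fintype ι] {y : ι → R}
    (hy : ∀ i, ∀ σ : G, σ • y i = y i) (u : R) {Q : Ideal R} {z : R}
    (hz : z ∈ Q + Ideal.span (Set.range y)) :
    ∃ q ∈ Q, ∃ c : ι → R, reynolds G u z = reynolds G u q + ∑ i, reynolds G u (c i) * y i := by
  obtain ⟨q, hq, w, hw, rfl⟩ := Submodule.mem_sup.1 hz
  obtain ⟨c, rfl⟩ := (Submodule.mem_span_range_iff_exists_fun R).1 hw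
  refine ⟨q, hq, c, ?_⟩
  simp only [map_add, map_sum, smul_eq_mul, reynolds_mul_of_forall_smul_eq (hy _)]

end MulSemiringAction

open MulSemiringAction

/-- Let `R` be a commutative ring with an action of a finite group `G` by ring
automorphisms, with `|G|` invertible in `R`. Let `Q` be a `G`-invariant ideal of `R` and
`y₁, …, y_s` elements of the invariant subring `R^G`. Then
`(Q + (y₁,…,y_s)R) ∩ R^G = (Q ∩ R^G) + (y₁,…,y_s)R^G`, where the intersection with `R^G`
is the preimage under the inclusion of the invariant subring. -/
theorem stmt_7 {R : Type*} [CommRing R] {G : Type*} [Group G] [Fintype G]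
    [MulSemiringAction G R] (u : R) (hu : (Fintype.card G : R) * u = 1)
    (B : Subring R) (hB : ∀ r : R, r ∈ B ↔ ∀ σ : G, σ • r = r)
    (Q : Ideal R) (hQ : ∀ σ : G, ∀ x ∈ Q, σ • x ∈ Q)
    (s : ℕ) (y : Fin s → R) (hy : ∀ i, y i ∈ B) :
    Ideal.comap B.subtype (Q + Ideal.span (Set.range y)) =
      Ideal.comap B.subtype Q +
        Ideal.span (Set.range fun i => (⟨y i, hy i⟩ : B)) := by
  have hρB (r : R) : reynolds G u r ∈ B :=
    (hB _).2 (smul_reynolds (smul_eq_self_of_natCast_mul_eq_one G hu) · r)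
  refine le_antisymm ?_ ?_
  · rintro ⟨x, hxB⟩ hx
    obtain ⟨q, hq, c, hxc⟩ := exists_reynolds_eq_add_sum (fun i => (hB _).1 (hy i)) u (z := x) hx
    rw [reynolds_eq_self hu ((hB x).1 hxB)] at hxc
    have hx_eq : (⟨x, hxB⟩ : B) =
        ⟨_, hρB q⟩ + ∑ i, ⟨_, hρB (c i)⟩ * ⟨y i, hy i⟩ := Subtype.ext (by simpa using hxc)
    rw [hx_eq]
    exact Submodule.add_mem_sup (reynolds_mem_ideal hQ u hq)
      (Ideal.sum_mem _ fun i _ => Ideal.mul_mem_left _ _ (Ideal.subset_span ⟨i, rfl⟩))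
  · rw [Ideal.add_eq_sup, sup_le_iff, Ideal.span_le]
    refine ⟨Ideal.comap_mono le_sup_left, ?_⟩
    rintro _ ⟨i, rfl⟩
    exact Submodule.mem_sup_right (Ideal.subset_span ⟨i, rfl⟩)
end

section
/- With R a commutative ring and G a finite group acting by ring automorphisms, the map ψ : R → (R*G)^G defined by ψ(r) = Σ_{σ ∈ G} σ(r)σ is a bijection which is left R^G-linear (ψ(ar) = aψ(r) for a ∈ R^G) and right R-linear for the right R-module structure (Σ σ(r)σ)·s = Σ σ(rs)σ. -/
/-- The natural `G`-action on the skew group ring `R*G`, on coefficient functions. -/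
def skewGroupRingAct {R : Type*} {G : Type*} [CommRing R] [Group G]
    [MulSemiringAction G R] (τ : G) (a : G → R) : G → R :=
  fun σ => τ • a (τ⁻¹ * σ)

section SkewGroupRingInvariants

variable {R G : Type*} [CommRing R] [Group G] [MulSemiringAction G R]

theorem skewGroupRingAct_orbit (τ : G) (r : R) :
    skewGroupRingAct τ (fun σ : G => σ • r) = fun σ => σ • r := by
  funext σ
  simp only [skewGroupRingAct, smul_smul, mul_inv_cancel_left]

theorem eq_orbit_of_skewGroupRingAct_eq {a : G → R} (ha : ∀ τ, skewGroupRingAct τ a = a) :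
    a = fun σ => σ • a 1 := by
  funext σ
  have h := congrFun (ha σ) σ
  simp only [skewGroupRingAct, inv_mul_cancel] at h
  exact h.symm

end SkewGroupRingInvariants

theorem orbit_injective {M α : Type*} [Monoid M] [MulAction M α] :
    Function.Injective fun (a : α) (m : M) => m • a := fun a b h => by
  simpa only [one_smul] using congrFun h 1

theorem stmt_10_general {R : Type*} {G : Type*} [CommRing R] [Group G]
    [MulSemiringAction G R] :
    ∀ ψ : R → (G → R), (∀ (r : R) (σ : G), ψ r σ = σ • r) →
      (∀ (r : R) (τ : G), skewGroupRingAct τ (ψ r) = ψ r) ∧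
      Function.Injective ψ ∧
      (∀ a : G → R, (∀ τ : G, skewGroupRingAct τ a = a) → ∃ r : R, a = ψ r) ∧
      (∀ a r : R, (∀ σ : G, σ • a = a) → ψ (a * r) = fun σ => a * ψ r σ) ∧
      (∀ r s : R, ψ (r * s) = fun σ => ψ r σ * σ • s) := by
  intro ψ hψ
  obtain rfl : ψ = fun r σ => σ • r := funext₂ hψ
  refine ⟨fun r τ => skewGroupRingAct_orbit τ r, orbit_injective,
    fun a ha => ⟨a 1, eq_orbit_of_skewGroupRingAct_eq ha⟩, fun a r ha => ?_, fun r s => ?_⟩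
  · funext σ
    simp only [smul_mul', ha]
  · funext σ
    exact smul_mul' σ r s

/-- The map `ψ : R → (R*G)^G`, `ψ(r) = Σ_{σ ∈ G} σ(r)σ`, is a bijection onto the
`G`-invariants of the skew group ring, is left `R^G`-linear (`ψ(ar) = aψ(r)` for
invariant `a`, coefficientwise), and is right `R`-linear for the right `R`-module
structure `(Σ σ(r)σ)·s = Σ σ(rs)σ` (coefficientwise `u·s` has coefficients
`u_σ · σ(s)`). -/
theorem stmt_10 {R : Type*} {G : Type*} [CommRing R] [Group G]
    [Finite G] [MulSemiringAction G R] :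
    ∀ ψ : R → (G → R), (∀ (r : R) (σ : G), ψ r σ = σ • r) →
      (∀ (r : R) (τ : G), skewGroupRingAct τ (ψ r) = ψ r) ∧
      Function.Injective ψ ∧
      (∀ a : G → R, (∀ τ : G, skewGroupRingAct τ a = a) → ∃ r : R, a = ψ r) ∧
      (∀ a r : R, (∀ σ : G, σ • a = a) → ψ (a * r) = fun σ => a * ψ r σ) ∧
      (∀ r s : R, ψ (r * s) = fun σ => ψ r σ * σ • s) :=
  stmt_10_general
end

section
/- Let R be an Artinian local ring with maximal ideal 𝔫 and residue field k, with a finite group G acting by local ring automorphisms inducing the identity on k, with |G|⁻¹ ∈ R. Let W be a cyclic R-module with a compatible G-action (an R*G-module with W ≅ R/Q as R-modules). If every group homomorphism G → kˣ is trivial, then W has a G-invariant generator; consequently W ≅ R/Q' as R*G-modules for some G-invariant ideal Q'. -/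
/-!
If `σ • w₀ = a σ • w₀`, then `σ ↦ a σ mod 𝔫` is the character by which `G` acts on the line
`W ⧸ 𝔫W ≅ k`; it is trivial by hypothesis, so every `a σ` is `≡ 1 mod 𝔫`. Hence the Reynolds
average `|G|⁻¹ • ∑ σ • w₀ = c • w₀` has `c ≡ 1 mod 𝔫`, so it is a `G`-invariant generator, and
its annihilator is a `G`-stable ideal `Q'` with `R ⧸ Q' ≅ W` equivariantly.
-/

open IsLocalRing

theorem smul_sum_smul_univ {G W : Type*} [Group G] [Fintype G] [AddCommMonoid W]
    [DistribMulAction G W] (τ : G) (w : W) : τ • ∑ σ : G, σ • w = ∑ σ : G, σ • w := by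
  simp only [Finset.smul_sum, smul_smul]
  exact Equiv.sum_comp (Equiv.mulLeft τ) (· • w)

theorem smul_eq_self_of_mul_natCast_eq_one {G R : Type*} [Monoid G] [Semiring R]
    [MulSemiringAction G R] (τ : G) {r : R} {n : ℕ} (h : r * n = 1) : τ • r = r := by
  have hn : τ • (n : R) = n := map_natCast (MulSemiringAction.toRingHom G R τ) n
  have hτ : τ • r * n = 1 := by rw [← hn, ← smul_mul', h, smul_one]
  calc τ • r = τ • r * (n * r) := by rw [Nat.cast_comm, h, mul_one]
    _ = r := by rw [← mul_assoc, hτ, one_mul]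

theorem IsLocalRing.residue_eq_of_smul_eq_smul {R M : Type*} [CommRing R] [IsLocalRing R]
    [AddCommGroup M] [Module R M] {w : M} (hw : w ≠ 0) {a b : R} (h : a • w = b • w) :
    residue R a = residue R b := by
  rw [← sub_eq_zero, ← map_sub, residue_eq_zero_iff, mem_maximalIdeal, mem_nonunits_iff]
  exact fun hu ↦ hw ((hu.smul_eq_zero).1 (by rw [sub_smul, h, sub_self]))

theorem exists_linearEquiv_quotient_of_smul_invariant_generator {R : Type*} [CommRing R]
    {G : Type*} [Monoid G] [MulSemiringAction G R]
    {W : Type*} [AddCommGroup W] [Module R W] [DistribMulAction G W]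
    (hcomp : ∀ (σ : G) (a : R) (w : W), σ • (a • w) = (σ • a) • (σ • w))
    {u : W} (hinv : ∀ σ : G, σ • u = u) (hgen : ∀ w : W, ∃ a : R, w = a • u) :
    ∃ Q : Ideal R, (∀ σ : G, ∀ x ∈ Q, σ • x ∈ Q) ∧
      ∃ e : (R ⧸ Q) ≃ₗ[R] W, ∀ (σ : G) (a : R),
        e (Ideal.Quotient.mk Q (σ • a)) = σ • e (Ideal.Quotient.mk Q a) := by
  let f := LinearMap.toSpanSingleton R W u
  have hf : Function.Surjective f := fun w ↦ (hgen w).imp fun a ha ↦ ha.symm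
  refine ⟨LinearMap.ker f, fun σ x hx ↦ ?_, f.quotKerEquivOfSurjective hf, fun σ a ↦ ?_⟩
  · change (σ • x) • u = 0
    rw [← hinv σ, ← hcomp, show x • u = 0 from hx, smul_zero]
  · change (σ • a) • u = σ • (a • u)
    rw [hcomp, hinv]

section InvariantGenerator

variable {R : Type*} [CommRing R] [IsLocalRing R] {G : Type*} [Group G] [MulSemiringAction G R]
  {W : Type*} [AddCommGroup W] [Module R W] [DistribMulAction G W]

noncomputable def residueCharacter (hres : ∀ (σ : G) (r : R), σ • r - r ∈ maximalIdeal R)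
    (hcomp : ∀ (σ : G) (a : R) (w : W), σ • (a • w) = (σ • a) • (σ • w))
    {w₀ : W} (hw₀ : w₀ ≠ 0) (a : G → R) (ha : ∀ σ : G, σ • w₀ = a σ • w₀) :
    G →* ResidueField R where
  toFun σ := residue R (a σ)
  map_one' := residue_eq_of_smul_eq_smul hw₀ (by rw [← ha, one_smul, one_smul])
  map_mul' σ τ := by
    have hστ : a (σ * τ) • w₀ = (σ • a τ * a σ) • w₀ := by
      rw [← ha, mul_smul, ha τ, hcomp, ha σ, mul_smul]
    have hσ : residue R (σ • a τ) = residue R (a τ) := by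
      rw [← sub_eq_zero, ← map_sub, residue_eq_zero_iff]
      exact hres σ (a τ)
    rw [residue_eq_of_smul_eq_smul hw₀ hστ, map_mul, hσ, mul_comm]

theorem exists_smul_invariant_generator [Fintype G]
    (hres : ∀ (σ : G) (r : R), σ • r - r ∈ maximalIdeal R)
    (hcard : IsUnit (Fintype.card G : R))
    (hcomp : ∀ (σ : G) (a : R) (w : W), σ • (a • w) = (σ • a) • (σ • w))
    (w₀ : W) (hgen : ∀ w : W, ∃ a : R, w = a • w₀)
    (htriv : ∀ χ : G →* (ResidueField R)ˣ, ∀ g : G, χ g = 1) :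
    ∃ u : W, (∀ σ : G, σ • u = u) ∧ ∀ w : W, ∃ a : R, w = a • u := by
  rcases eq_or_ne w₀ 0 with rfl | hw₀
  · exact ⟨0, smul_zero, hgen⟩
  choose a ha using fun σ : G ↦ hgen (σ • w₀)
  have ha_one (σ : G) : residue R (a σ) = 1 :=
    congrArg Units.val (htriv (residueCharacter hres hcomp hw₀ a ha).toHomUnits σ)
  obtain ⟨r, hr⟩ := hcard.exists_left_inv
  set c := r * ∑ σ, a σ
  have hc : IsUnit c := by
    rw [← residue_ne_zero_iff_isUnit, map_mul, map_sum]
    simp only [ha_one, Finset.sum_const, Finset.card_univ, nsmul_one]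
    rw [← map_natCast (residue R), ← map_mul, hr, map_one]
    exact one_ne_zero
  have hreynolds : r • ∑ σ : G, σ • w₀ = c • w₀ := by
    rw [Finset.sum_congr rfl fun σ _ ↦ ha σ, ← Finset.sum_smul, smul_smul]
  refine ⟨c • w₀, fun τ ↦ ?_, fun w ↦ ?_⟩
  · rw [← hreynolds, hcomp, smul_eq_self_of_mul_natCast_eq_one τ hr, smul_sum_smul_univ]
  · obtain ⟨b, rfl⟩ := hgen w
    exact ⟨b * ↑hc.unit⁻¹, by rw [smul_smul, mul_assoc, hc.val_inv_mul, mul_one]⟩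

end InvariantGenerator

theorem stmt_16_general {R : Type*} [CommRing R] [IsLocalRing R]
    {G : Type*} [Group G] [Fintype G] [MulSemiringAction G R]
    (hres : ∀ (σ : G) (r : R), σ • r - r ∈ IsLocalRing.maximalIdeal R)
    (hcard : IsUnit ((Fintype.card G : R)))
    {W : Type*} [AddCommGroup W] [Module R W] [DistribMulAction G W]
    (hcomp : ∀ (σ : G) (a : R) (w : W), σ • (a • w) = (σ • a) • (σ • w))
    (w₀ : W) (hgen : ∀ w : W, ∃ a : R, w = a • w₀)
    (htriv : ∀ χ : G →* (IsLocalRing.ResidueField R)ˣ, ∀ g : G, χ g = 1) :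
    ∃ u : W, (∀ σ : G, σ • u = u) ∧ (∀ w : W, ∃ a : R, w = a • u) ∧
      ∃ Q' : Ideal R, (∀ σ : G, ∀ x ∈ Q', σ • x ∈ Q') ∧
        ∃ e : (R ⧸ Q') ≃ₗ[R] W,
          ∀ (σ : G) (a : R),
            e (Ideal.Quotient.mk Q' (σ • a)) = σ • e (Ideal.Quotient.mk Q' a) := by
  obtain ⟨u, hinv, hgen_u⟩ := exists_smul_invariant_generator hres hcard hcomp w₀ hgen htriv
  exact ⟨u, hinv, hgen_u,
    exists_linearEquiv_quotient_of_smul_invariant_generator hcomp hinv hgen_u⟩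

/-- Let `R` be an Artinian local ring with maximal ideal `𝔫` and residue field `k`, with
a finite group `G` acting by ring automorphisms inducing the identity on `k`, and with
`|G|` invertible in `R`. Let `W` be a cyclic `R`-module with a compatible `G`-action
(an `R*G`-module with `W ≅ R/Q` as `R`-modules, i.e. generated by some `w₀`). If every
group homomorphism `G →* kˣ` is trivial, then `W` has a `G`-invariant generator `u`;
consequently `W ≅ R/Q'` as `R*G`-modules for some `G`-invariant ideal `Q'` (the
isomorphism being `R`-linear and `G`-equivariant for the induced action on `R/Q'`). -/
theorem stmt_16 {R : Type*} [CommRing R] [IsArtinianRing R] [IsLocalRing R]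
    {G : Type*} [Group G] [Fintype G] [MulSemiringAction G R]
    (hres : ∀ (σ : G) (r : R), σ • r - r ∈ IsLocalRing.maximalIdeal R)
    (hcard : IsUnit ((Fintype.card G : R)))
    {W : Type*} [AddCommGroup W] [Module R W] [DistribMulAction G W]
    (hcomp : ∀ (σ : G) (a : R) (w : W), σ • (a • w) = (σ • a) • (σ • w))
    (w₀ : W) (hgen : ∀ w : W, ∃ a : R, w = a • w₀)
    (htriv : ∀ χ : G →* (IsLocalRing.ResidueField R)ˣ, ∀ g : G, χ g = 1) :
    ∃ u : W, (∀ σ : G, σ • u = u) ∧ (∀ w : W, ∃ a : R, w = a • u) ∧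
      ∃ Q' : Ideal R, (∀ σ : G, ∀ x ∈ Q', σ • x ∈ Q') ∧
        ∃ e : (R ⧸ Q') ≃ₗ[R] W,
          ∀ (σ : G) (a : R),
            e (Ideal.Quotient.mk Q' (σ • a)) = σ • e (Ideal.Quotient.mk Q' a) :=
  stmt_16_general hres hcard hcomp w₀ hgen htriv
end

section
/- Let B ⊆ S be an extension of commutative Noetherian local rings (with B → S module-finite) such that the inclusion B → S splits as B-modules via a retraction ρ with ρ(1) = 1. If ρ ∈ 𝔫·Hom_B(S, B), where 𝔫 is the maximal ideal of S and 𝔫 = 𝔫^B ⊕ L for a splitting S = B ⊕ L with L ⊆ 𝔫, then L has a free B-summand; equivalently, if the free rank of S as a B-module is 1, then ρ ∉ 𝔫·Hom_B(S, B). -/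
/-!
Write `L = ker ρ` and `a = ρ(a) + (a - ρ(a))` with `a - ρ(a) ∈ L`. Suppose no `B`-linear map
`L → B` is onto; over the local ring `B` this means every functional `S → B` sends `L` into
`𝔪_B`. Each coefficient `ρ(aᵢ)` also lies in `𝔪_B`: otherwise `aᵢ - ρ(aᵢ)` is a unit `u` of `S`
lying in `L` (as `aᵢ ∈ 𝔫`), and `x ↦ ρ(x u⁻¹)` maps `L` onto `B`. Hence
`1 = ρ(1) = Σ φᵢ(aᵢ) = Σ (ρ(aᵢ) φᵢ(1) + φᵢ(aᵢ - ρ(aᵢ)))` lies in `𝔪_B`, which is absurd.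
-/

open IsLocalRing

theorem LinearMap.surjective_of_isUnit_apply {R M : Type*} [Semiring R] [AddCommMonoid M]
    [Module R M] (f : M →ₗ[R] R) {x : M} (hx : IsUnit (f x)) : Function.Surjective f :=
  fun b => ⟨(b * ↑hx.unit⁻¹) • x, by rw [map_smul, smul_eq_mul, mul_assoc, hx.val_inv_mul,
    mul_one]⟩

theorem IsLocalRing.isUnit_sub_of_mem_maximalIdeal {S : Type*} [CommRing S] [IsLocalRing S]
    {a u : S} (ha : a ∈ maximalIdeal S) (hu : IsUnit u) : IsUnit (a - u) := by
  by_contra h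
  exact (mem_maximalIdeal u).mp (by simpa using sub_mem ha h) hu

section Retraction

variable {B S : Type*} [CommRing B] [Ring S] [Algebra B S] (ρ : S →ₗ[B] B)

theorem sub_algebraMap_mem_ker_of_retraction (hret : ∀ b : B, ρ (algebraMap B S b) = b)
    (x : S) : x - algebraMap B S (ρ x) ∈ LinearMap.ker ρ := by
  rw [LinearMap.mem_ker, map_sub, hret, sub_self]

theorem exists_surjective_ker_of_isUnit_mem_ker (hρ1 : ρ 1 = 1) {u : S} (hu : IsUnit u)
    (huρ : u ∈ LinearMap.ker ρ) :
    ∃ ψ : LinearMap.ker ρ →ₗ[B] B, Function.Surjective ψ :=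
  ⟨ρ ∘ₗ LinearMap.mulRight B ↑hu.unit⁻¹ ∘ₗ (LinearMap.ker ρ).subtype,
    LinearMap.surjective_of_isUnit_apply _ (x := ⟨u, huρ⟩) (by simp [hρ1])⟩

end Retraction

theorem stmt_17_general {B S : Type*} [CommRing B] [IsLocalRing B]
    [CommRing S] [IsLocalRing S] [Algebra B S]
    (ρ : S →ₗ[B] B) (hret : ∀ b : B, ρ (algebraMap B S b) = b)
    (n : ℕ) (a : Fin n → S) (φ : Fin n → (S →ₗ[B] B))
    (ha : ∀ i, a i ∈ IsLocalRing.maximalIdeal S)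
    (hρ : ∀ x : S, ρ x = ∑ i, φ i (a i * x)) :
    ∃ ψ : (LinearMap.ker ρ) →ₗ[B] B, Function.Surjective ψ := by
  by_contra! hL
  have hρ1 : ρ 1 = 1 := by simpa using hret 1
  have hker (f : S →ₗ[B] B) (x : S) (hx : x ∈ LinearMap.ker ρ) : f x ∈ maximalIdeal B :=
    fun hunit => hL _ <|
      LinearMap.surjective_of_isUnit_apply (f ∘ₗ (LinearMap.ker ρ).subtype) (x := ⟨x, hx⟩) hunit
  have hcoeff (i : Fin n) : ρ (a i) ∈ maximalIdeal B := fun hunit => by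
    have hu := isUnit_sub_of_mem_maximalIdeal (ha i) (hunit.map (algebraMap B S))
    obtain ⟨ψ, hψ⟩ := exists_surjective_ker_of_isUnit_mem_ker ρ hρ1 hu
      (sub_algebraMap_mem_ker_of_retraction ρ hret (a i))
    exact hL ψ hψ
  have hone : (1 : B) ∈ maximalIdeal B := by
    rw [← hρ1, hρ]
    refine Ideal.sum_mem _ fun i _ => ?_
    have hsplit : a i = ρ (a i) • (1 : S) + (a i - algebraMap B S (ρ (a i))) := by
      rw [Algebra.algebraMap_eq_smul_one, add_sub_cancel]
    rw [mul_one, hsplit, map_add, map_smul, smul_eq_mul]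
    exact add_mem (Ideal.mul_mem_right _ _ (hcoeff i))
      (hker _ _ (sub_algebraMap_mem_ker_of_retraction ρ hret (a i)))
  exact (maximalIdeal.isMaximal B).ne_top ((Ideal.eq_top_iff_one _).mpr hone)

/-- Let `B ⊆ S` be a module-finite extension of commutative Noetherian local rings such
that the inclusion `B → S` splits as `B`-modules via a retraction `ρ` (so `ρ ∘ ι = id`,
in particular `ρ(1) = 1`), giving the splitting `S = B ⊕ L` with `L = ker ρ`. If
`ρ ∈ 𝔫·Hom_B(S, B)` where `𝔫` is the maximal ideal of `S` (i.e. `ρ = Σᵢ aᵢ·φᵢ` with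
`aᵢ ∈ 𝔫`, `φᵢ ∈ Hom_B(S, B)` and the `S`-action `(s·φ)(x) = φ(sx)`), then `L` has a free
`B`-summand (equivalently, there is a surjective `B`-linear map `L → B`); equivalently,
if the free rank of `S` over `B` is `1`, then `ρ ∉ 𝔫·Hom_B(S, B)`. -/
theorem stmt_17 {B S : Type*} [CommRing B] [IsNoetherianRing B] [IsLocalRing B]
    [CommRing S] [IsNoetherianRing S] [IsLocalRing S] [Algebra B S] [Module.Finite B S]
    (hinj : Function.Injective (algebraMap B S))
    (ρ : S →ₗ[B] B) (hret : ∀ b : B, ρ (algebraMap B S b) = b)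
    (n : ℕ) (a : Fin n → S) (φ : Fin n → (S →ₗ[B] B))
    (ha : ∀ i, a i ∈ IsLocalRing.maximalIdeal S)
    (hρ : ∀ x : S, ρ x = ∑ i, φ i (a i * x)) :
    ∃ ψ : (LinearMap.ker ρ) →ₗ[B] B, Function.Surjective ψ :=
  stmt_17_general ρ hret n a φ ha hρ
end
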